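/- For every linear functional T on 𝒰 there exists a unique u ∈ 𝒰 such that ⟨u', v'⟩ = T[v] for all v ∈ 𝒰, and this u satisfies ‖u'‖_{ℓ∞} ≤ 2 ‖T‖_{𝒰^{−1,∞}}. -/

import Mathlib

open Finset Real

noncomputable section

/-- The index set `{-N+1, ..., N}` of one period. -/
def idx (N : ℕ) : Finset ℤ := Finset.Icc (-(N : ℤ) + 1) (N : ℤ)

/-- The space 𝒰 of 2N-periodic displacements with zero mean. -/
def uSet (N : ℕ) : Set (ℤ → ℝ) :=
  {u | (∀ ℓ : ℤ, u (ℓ + 2 * (N : ℤ)) = u ℓ) ∧ ∑ ℓ ∈ idx N, u ℓ = 0}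

/-- Backward difference `v'_ℓ = ε⁻¹ (v_ℓ - v_{ℓ-1})`, with `ε = 1/N`. -/
def bD (N : ℕ) (v : ℤ → ℝ) (ℓ : ℤ) : ℝ := (N : ℝ) * (v ℓ - v (ℓ - 1))

/-- Centered second difference `v''_ℓ = ε⁻² (v_{ℓ+1} - 2 v_ℓ + v_{ℓ-1})`. -/
def cD2 (N : ℕ) (v : ℤ → ℝ) (ℓ : ℤ) : ℝ := (N : ℝ) ^ 2 * (v (ℓ + 1) - 2 * v ℓ + v (ℓ - 1))

/-- Weighted ℓ²-norm. -/
def nl2 (N : ℕ) (v : ℤ → ℝ) : ℝ := Real.sqrt ((N : ℝ)⁻¹ * ∑ ℓ ∈ idx N, (v ℓ) ^ 2)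

/-- Weighted ℓ¹-norm. -/
def nl1 (N : ℕ) (v : ℤ → ℝ) : ℝ := (N : ℝ)⁻¹ * ∑ ℓ ∈ idx N, |v ℓ|

/-- ℓ∞-norm over one period. -/
def nlinf (N : ℕ) (v : ℤ → ℝ) : ℝ := ⨆ ℓ : {ℓ : ℤ // ℓ ∈ idx N}, |v ℓ.1|

/-- Weighted ℓ²-inner product. -/
def iprod (N : ℕ) (u v : ℤ → ℝ) : ℝ := (N : ℝ)⁻¹ * ∑ ℓ ∈ idx N, u ℓ * v ℓ

/-- The uniform deformation `(y_F)_ℓ = F ℓ ε`. -/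
def yF (N : ℕ) (F : ℝ) : ℤ → ℝ := fun ℓ => F * (ℓ : ℝ) * (N : ℝ)⁻¹

/-- First variation `E'(y)[u]`. -/
def dE (E : (ℤ → ℝ) → ℝ) (y u : ℤ → ℝ) : ℝ := deriv (fun t : ℝ => E (y + t • u)) 0

/-- Second variation `E''(y)[u,v]`. -/
def d2E (E : (ℤ → ℝ) → ℝ) (y u v : ℤ → ℝ) : ℝ :=
  deriv (fun s : ℝ => deriv (fun t : ℝ => E (y + s • u + t • v)) 0) 0

/-- The atomistic energy. -/
def Ea (N : ℕ) (φ : ℝ → ℝ) (y : ℤ → ℝ) : ℝ :=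
  (N : ℝ)⁻¹ * ∑ ℓ ∈ idx N, (φ (bD N y ℓ) + φ (bD N y ℓ + bD N y (ℓ + 1)))

/-- The local QC (continuum) energy. -/
def Eqcl (N : ℕ) (φ : ℝ → ℝ) (y : ℤ → ℝ) : ℝ :=
  (N : ℝ)⁻¹ * ∑ ℓ ∈ idx N, (φ (bD N y ℓ) + φ (2 * bD N y ℓ))

/-- The QNL atomistic region `{-K-1, ..., K+1}`. -/
def aQnl (K : ℕ) : Finset ℤ := Finset.Icc (-(K : ℤ) - 1) ((K : ℤ) + 1)

/-- The quasi-nonlocal QC energy. -/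
def Eqnl (N K : ℕ) (φ : ℝ → ℝ) (y : ℤ → ℝ) : ℝ :=
  (N : ℝ)⁻¹ * ((∑ ℓ ∈ idx N, φ (bD N y ℓ))
    + (∑ ℓ ∈ aQnl K, φ (bD N y ℓ + bD N y (ℓ + 1)))
    + ∑ ℓ ∈ idx N \ aQnl K, (φ (2 * bD N y ℓ) + φ (2 * bD N y (ℓ + 1))) / 2)

/-- The QCE atomistic region `{-K, ..., K}`. -/
def aQce (K : ℕ) : Finset ℤ := Finset.Icc (-(K : ℤ)) (K : ℤ)

/-- Atomistic energy contribution of atom ℓ. -/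
def eAtom (N : ℕ) (φ : ℝ → ℝ) (y : ℤ → ℝ) (ℓ : ℤ) : ℝ :=
  (φ (bD N y ℓ) + φ (bD N y (ℓ + 1)) + φ (bD N y (ℓ - 1) + bD N y ℓ)
    + φ (bD N y (ℓ + 1) + bD N y (ℓ + 2))) / 2

/-- Continuum energy contribution of atom ℓ. -/
def eCont (N : ℕ) (φ : ℝ → ℝ) (y : ℤ → ℝ) (ℓ : ℤ) : ℝ :=
  (φ (bD N y ℓ) + φ (bD N y (ℓ + 1)) + φ (2 * bD N y ℓ) + φ (2 * bD N y (ℓ + 1))) / 2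

/-- The energy-based QC energy. -/
def Eqce (N K : ℕ) (φ : ℝ → ℝ) (y : ℤ → ℝ) : ℝ :=
  (N : ℝ)⁻¹ * ((∑ ℓ ∈ idx N \ aQce K, eCont N φ y ℓ) + ∑ ℓ ∈ aQce K, eAtom N φ y ℓ)

/-- The prescribed backward difference `ĝ'` of the ghost-force corrector. -/
def ghatD (K : ℕ) (ℓ : ℤ) : ℝ :=
  if ℓ = -(K : ℤ) - 1 ∨ ℓ = (K : ℤ) + 2 then -(1 / 2)
  else if ℓ = -(K : ℤ) + 1 ∨ ℓ = (K : ℤ) then 1 / 2 else 0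

/-- `μ_ε = 2 sin(π ε / 2) / ε` with `ε = 1/N`. -/
def muEps (N : ℕ) : ℝ := 2 * Real.sin (Real.pi * (N : ℝ)⁻¹ / 2) / (N : ℝ)⁻¹

/-- The `𝒰^{-1,∞}`-norm of a functional `T` on 𝒰. -/
def dualNorm (N : ℕ) (T : (ℤ → ℝ) → ℝ) : ℝ :=
  sSup {r : ℝ | ∃ v ∈ uSet N, nl1 N (bD N v) = 1 ∧ r = T v}


/-!
The Dirichlet form `⟨u', v'⟩` is positive definite on the finite-dimensional space `𝒰`, since a
mean-zero periodic sequence with vanishing difference is zero; hence `T` has a unique Riesz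
representative `u`.

For the bound, periodize the step `δ 𝟙_{[a, b)}` and subtract its mean: this is a test sequence
`v ∈ 𝒰` whose difference is the dipole `N δ (𝟙_a - 𝟙_b)`, so `‖v'‖_{ℓ¹_ε} = 2|δ|` and
`T[v] = δ (u'_a - u'_b)`; taking `δ = ±1/2` gives `|u'_a - u'_b| ≤ 2 ‖T‖`. As `u'` has zero sum,
for every `a` some `b ≠ a` has `u'_b` zero or of the sign opposite to `u'_a`, so that
`|u'_a| ≤ |u'_a - u'_b|`.
-/

open Function

theorem LinearMap.BilinForm.Nondegenerate.existsUnique_apply_eq {K V : Type*} [Field K]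
    [AddCommGroup V] [Module K V] [FiniteDimensional K V] {B : LinearMap.BilinForm K V}
    (hB : B.Nondegenerate) (f : Module.Dual K V) : ∃! u, ∀ v, B u v = f v :=
  ⟨(B.toDual hB).symm f, apply_toDual_symm_apply f,
    fun _ hu => (B.toDual hB).eq_symm_apply.mpr (LinearMap.ext hu)⟩

theorem Finset.sum_Icc_sub_pred {M : Type*} [AddCommGroup M] (f : ℤ → M) {a b : ℤ}
    (hab : a - 1 ≤ b) : ∑ ℓ ∈ Icc a b, (f ℓ - f (ℓ - 1)) = f b - f (a - 1) := by
  induction b, hab using Int.leInduction with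
  | base => simp
  | succ n hn ih =>
    rw [← insert_Icc_right_eq_Icc_add_one (by omega), sum_insert (by simp), ih,
      add_sub_cancel_right]
    abel

theorem Finset.exists_ne_abs_le_abs_sub {ι : Type*} {s : Finset ι} {f : ι → ℝ}
    (hf : ∑ j ∈ s, f j = 0) (hs : 1 < #s) {i : ι} (hi : i ∈ s) :
    ∃ j ∈ s, j ≠ i ∧ |f i| ≤ |f i - f j| := by
  by_contra! h
  have hfi : 0 < f i * f i := by
    obtain ⟨j, hj, hji⟩ := exists_mem_ne hs i
    exact mul_self_pos.mpr (abs_pos.mp ((abs_nonneg _).trans_lt (h j hj hji)))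
  have hpos : ∀ j ∈ s, 0 < f i * f j := by
    intro j hj
    rcases eq_or_ne j i with rfl | hji
    · exact hfi
    · nlinarith [sq_lt_sq.mpr (h j hj hji), sq_nonneg (f j)]
  have := sum_pos hpos ⟨i, hi⟩
  rw [← mul_sum, hf, mul_zero] at this
  exact this.false

variable {N : ℕ}

lemma mem_idx_iff {ℓ : ℤ} : ℓ ∈ idx N ↔ -(N : ℤ) < ℓ ∧ ℓ ≤ N := by
  simp only [idx, Finset.mem_Icc]
  omega

lemma card_idx (N : ℕ) : #(idx N) = 2 * N := by
  simp only [idx, Int.card_Icc]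
  omega

section Periodic

lemma periodic_ext (hN : 0 < N) {β : Type*} {f g : ℤ → β} (hf : Periodic f (2 * N))
    (hg : Periodic g (2 * N)) (h : ∀ ℓ ∈ idx N, f ℓ = g ℓ) : f = g := by
  have hp : (0 : ℤ) < 2 * N := by omega
  funext ℓ
  have hmem : toIocMod hp (-N) ℓ ∈ idx N := by
    have := toIocMod_mem_Ioc hp (-N) ℓ
    rw [Set.mem_Ioc] at this
    exact mem_idx_iff.mpr ⟨this.1, by omega⟩
  rw [← hf.sub_zsmul_eq (toIocDiv hp (-N) ℓ), ← hg.sub_zsmul_eq (toIocDiv hp (-N) ℓ),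
    self_sub_toIocDiv_zsmul]
  exact h _ hmem

lemma exists_periodic_eqOn_Icc (hN : 0 < N) {w : ℤ → ℝ} (hw : w (-N) = w N) :
    ∃ p : ℤ → ℝ, Periodic p (2 * N) ∧ ∀ ℓ, -(N : ℤ) ≤ ℓ → ℓ ≤ N → p ℓ = w ℓ := by
  have hp : (0 : ℤ) < 2 * N := by omega
  refine ⟨fun ℓ => w (toIocMod hp (-N) ℓ), fun ℓ => by simp only [toIocMod_add_right],
    fun ℓ h₁ h₂ => ?_⟩
  dsimp only
  rcases h₁.eq_or_lt with rfl | h₁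
  · rw [toIocMod_apply_left, hw]
    congr 1
    ring
  · rw [(toIocMod_eq_self hp).mpr ⟨h₁, by omega⟩]

lemma periodic_bD {u : ℤ → ℝ} (hu : Periodic u (2 * N)) : Periodic (bD N u) (2 * N) := by
  intro ℓ
  simp only [bD, hu ℓ, show ℓ + 2 * N - 1 = ℓ - 1 + 2 * N by ring, hu (ℓ - 1)]

lemma sum_bD_eq_zero {u : ℤ → ℝ} (hu : Periodic u (2 * N)) : ∑ ℓ ∈ idx N, bD N u ℓ = 0 := by
  have hwrap : u (-N) = u N := by
    simpa only [neg_add_cancel_comm_assoc, two_mul] using (hu (-N)).symm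
  simp only [bD, ← mul_sum, idx, sum_Icc_sub_pred u (show -(N : ℤ) + 1 - 1 ≤ N by omega),
    add_sub_cancel_right, hwrap, sub_self, mul_zero]

end Periodic

section MeanZero

def uSub (N : ℕ) : Submodule ℝ (ℤ → ℝ) where
  carrier := uSet N
  add_mem' := by
    rintro u v ⟨hu, hu₀⟩ ⟨hv, hv₀⟩
    exact ⟨Periodic.add hu hv, by simp only [Pi.add_apply, sum_add_distrib, hu₀, hv₀, add_zero]⟩
  zero_mem' := ⟨fun _ => rfl, by simp⟩
  smul_mem' := by
    rintro c u ⟨hu, hu₀⟩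
    exact ⟨Periodic.smul hu c, by simp only [Pi.smul_apply, smul_eq_mul, ← mul_sum, hu₀, mul_zero]⟩

lemma finiteDimensional_uSub (hN : 0 < N) : FiniteDimensional ℝ (uSub N) :=
  .of_injective ((LinearMap.funLeft ℝ ℝ (Subtype.val : idx N → ℤ)).comp (uSub N).subtype)
    fun u v h => Subtype.ext (periodic_ext hN u.2.1 v.2.1 fun ℓ hℓ => congrFun h ⟨ℓ, hℓ⟩)

lemma exists_mem_uSet_bD_eq (hN : 0 < N) {p : ℤ → ℝ} (hp : Periodic p (2 * N)) :
    ∃ v ∈ uSet N, bD N v = bD N p := by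
  refine ⟨fun ℓ => p ℓ - (∑ ℓ ∈ idx N, p ℓ) / (2 * N), ⟨fun ℓ => by simp only [hp ℓ], ?_⟩,
    funext fun ℓ => by simp only [bD, sub_sub_sub_cancel_right]⟩
  have : (N : ℝ) ≠ 0 := by positivity
  rw [sum_sub_distrib, sum_const, card_idx, nsmul_eq_mul]
  push_cast
  field_simp
  ring

lemma eq_zero_of_forall_bD_eq_zero (hN : 0 < N) {u : ℤ → ℝ} (hu : u ∈ uSet N)
    (h : ∀ ℓ ∈ idx N, bD N u ℓ = 0) : u = 0 := by
  have hbD : bD N u = 0 := periodic_ext hN (periodic_bD hu.1) (fun _ => rfl) h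
  have hN' : (N : ℝ) ≠ 0 := by positivity
  have hu₁ : Periodic u 1 := fun ℓ => by
    simpa [bD, hN', sub_eq_zero] using congrFun hbD (ℓ + 1)
  have hconst : ∀ ℓ, u ℓ = u 0 := fun ℓ => by simpa using hu₁.int_mul_eq ℓ
  have hu0 : u 0 = 0 := by
    have := hu.2
    simp only [hconst _, sum_const, card_idx, nsmul_eq_mul] at this
    simpa [hN'] using this
  funext ℓ
  rw [hconst, hu0, Pi.zero_apply]

end MeanZero

section DirichletForm

def dirichletForm (N : ℕ) : LinearMap.BilinForm ℝ (ℤ → ℝ) :=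
  LinearMap.mk₂ ℝ (fun u v => iprod N (bD N u) (bD N v))
    (fun _ _ _ => by
      simp only [iprod, bD, Pi.add_apply, mul_sum, ← sum_add_distrib]
      exact sum_congr rfl fun _ _ => by ring)
    (fun _ _ _ => by
      simp only [iprod, bD, Pi.smul_apply, smul_eq_mul, mul_sum]
      exact sum_congr rfl fun _ _ => by ring)
    (fun _ _ _ => by
      simp only [iprod, bD, Pi.add_apply, mul_sum, ← sum_add_distrib]
      exact sum_congr rfl fun _ _ => by ring)
    (fun _ _ _ => by
      simp only [iprod, bD, Pi.smul_apply, smul_eq_mul, mul_sum]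
      exact sum_congr rfl fun _ _ => by ring)

lemma eq_zero_of_iprod_self_eq_zero (hN : 0 < N) {g : ℤ → ℝ} (h : iprod N g g = 0) :
    ∀ ℓ ∈ idx N, g ℓ = 0 := by
  have hsum : ∑ ℓ ∈ idx N, g ℓ * g ℓ = 0 := by
    simpa [iprod, hN.ne'] using h
  exact fun ℓ hℓ => mul_self_eq_zero.mp
    ((sum_eq_zero_iff_of_nonneg fun i _ => mul_self_nonneg (g i)).mp hsum ℓ hℓ)

lemma separatingLeft_dirichletForm_restrict (hN : 0 < N) :
    ((dirichletForm N).restrict (uSub N)).SeparatingLeft := fun u hu =>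
  Subtype.ext (eq_zero_of_forall_bD_eq_zero hN u.2 (eq_zero_of_iprod_self_eq_zero hN (hu u)))

end DirichletForm

section Dipole

def dipole (N : ℕ) (a b : ℤ) (δ : ℝ) (ℓ : ℤ) : ℝ :=
  N * δ * ((if ℓ = a then 1 else 0) - if ℓ = b then 1 else 0)

lemma exists_mem_uSet_bD_eq_dipole (hN : 0 < N) {a b : ℤ} (ha : a ∈ idx N) (hb : b ∈ idx N)
    (hab : a < b) (δ : ℝ) : ∃ v ∈ uSet N, ∀ ℓ ∈ idx N, bD N v ℓ = dipole N a b δ ℓ := by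
  rw [mem_idx_iff] at ha hb
  obtain ⟨p, hp, hpw⟩ := exists_periodic_eqOn_Icc (w := fun ℓ => if a ≤ ℓ ∧ ℓ < b then δ else 0)
    hN (by rw [if_neg (by omega), if_neg (by omega)])
  obtain ⟨v, hv, hvp⟩ := exists_mem_uSet_bD_eq hN hp
  refine ⟨v, hv, fun ℓ hℓ => ?_⟩
  rw [mem_idx_iff] at hℓ
  rw [hvp, bD, dipole, hpw ℓ (by omega) hℓ.2, hpw (ℓ - 1) (by omega) (by omega)]
  split_ifs <;> first | ring1 | (exfalso; omega)

lemma nl1_dipole (hN : 0 < N) {a b : ℤ} (ha : a ∈ idx N) (hb : b ∈ idx N) (hab : a ≠ b)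
    (δ : ℝ) : nl1 N (dipole N a b δ) = 2 * |δ| := by
  have habs : ∀ ℓ, |dipole N a b δ ℓ| =
      N * |δ| * ((if ℓ = a then 1 else 0) + if ℓ = b then 1 else 0) := fun ℓ => by
    rw [dipole, abs_mul, abs_mul, Nat.abs_cast]
    split_ifs <;> simp_all
  have : (N : ℝ) ≠ 0 := by positivity
  simp only [nl1, habs, ← mul_sum, sum_add_distrib, sum_ite_eq', ha, hb, if_true]
  field_simp
  ring

lemma iprod_dipole (hN : 0 < N) {a b : ℤ} (ha : a ∈ idx N) (hb : b ∈ idx N) (g : ℤ → ℝ)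
    (δ : ℝ) : iprod N g (dipole N a b δ) = δ * (g a - g b) := by
  have : (N : ℝ) ≠ 0 := by positivity
  simp only [iprod, dipole, mul_sub, mul_ite, mul_one, mul_zero, sum_sub_distrib, sum_ite_eq',
    ha, hb, if_true]
  field_simp

end Dipole

section DualNorm

lemma abs_le_nlinf (g : ℤ → ℝ) {ℓ : ℤ} (hℓ : ℓ ∈ idx N) : |g ℓ| ≤ nlinf N g :=
  le_ciSup (f := fun ℓ : {ℓ : ℤ // ℓ ∈ idx N} => |g ℓ.1|) (Set.finite_range _).bddAbove ⟨ℓ, hℓ⟩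

lemma iprod_le_nlinf_mul_nl1 (g h : ℤ → ℝ) : iprod N g h ≤ nlinf N g * nl1 N h := by
  have hterm : ∀ ℓ ∈ idx N, g ℓ * h ℓ ≤ nlinf N g * |h ℓ| := fun ℓ hℓ =>
    calc g ℓ * h ℓ ≤ |g ℓ| * |h ℓ| := by rw [← abs_mul]; exact le_abs_self _
      _ ≤ nlinf N g * |h ℓ| := by gcongr; exact abs_le_nlinf g hℓ
  calc iprod N g h ≤ (N : ℝ)⁻¹ * ∑ ℓ ∈ idx N, nlinf N g * |h ℓ| :=
        mul_le_mul_of_nonneg_left (sum_le_sum hterm) (by positivity)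
    _ = nlinf N g * nl1 N h := by rw [nl1, ← mul_sum, mul_left_comm]

variable {T : (ℤ → ℝ) → ℝ} {g : ℤ → ℝ}

lemma bddAbove_of_forall_iprod_eq (hg : ∀ v ∈ uSet N, iprod N g (bD N v) = T v) :
    BddAbove {r : ℝ | ∃ v ∈ uSet N, nl1 N (bD N v) = 1 ∧ r = T v} := by
  refine ⟨nlinf N g, ?_⟩
  rintro _ ⟨v, hv, hv₁, rfl⟩
  simpa [← hg v hv, hv₁] using iprod_le_nlinf_mul_nl1 (N := N) g (bD N v)

lemma abs_sub_le_two_mul_dualNorm (hN : 0 < N) (hg : ∀ v ∈ uSet N, iprod N g (bD N v) = T v)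
    {a b : ℤ} (ha : a ∈ idx N) (hb : b ∈ idx N) (hab : a < b) :
    |g a - g b| ≤ 2 * dualNorm N T := by
  have htest : ∀ δ : ℝ, |δ| = 1 / 2 → δ * (g a - g b) ≤ dualNorm N T := by
    intro δ hδ
    obtain ⟨v, hv, hvd⟩ := exists_mem_uSet_bD_eq_dipole hN ha hb hab δ
    have hnl1 : nl1 N (bD N v) = nl1 N (dipole N a b δ) := by
      simp only [nl1]
      rw [sum_congr rfl fun ℓ hℓ => by rw [hvd ℓ hℓ]]
    have hT : T v = iprod N g (dipole N a b δ) := by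
      simp only [← hg v hv, iprod]
      rw [sum_congr rfl fun ℓ hℓ => by rw [hvd ℓ hℓ]]
    refine le_csSup (bddAbove_of_forall_iprod_eq hg) ⟨v, hv, ?_, ?_⟩
    · rw [hnl1, nl1_dipole hN ha hb hab.ne, hδ]
      norm_num
    · rw [hT, iprod_dipole hN ha hb]
  have hpos := htest (1 / 2) (by norm_num)
  have hneg := htest (-(1 / 2)) (by norm_num)
  rw [abs_le']
  constructor <;> linarith

lemma nlinf_le_two_mul_dualNorm (hN : 0 < N) (hg : ∀ v ∈ uSet N, iprod N g (bD N v) = T v)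
    (hsum : ∑ ℓ ∈ idx N, g ℓ = 0) : nlinf N g ≤ 2 * dualNorm N T := by
  have : Nonempty {ℓ : ℤ // ℓ ∈ idx N} := ⟨⟨N, mem_idx_iff.mpr ⟨by omega, le_rfl⟩⟩⟩
  refine ciSup_le fun ⟨ℓ, hℓ⟩ => ?_
  obtain ⟨ℓ', hℓ', hne, hle⟩ := exists_ne_abs_le_abs_sub hsum (by rw [card_idx]; omega) hℓ
  refine hle.trans ?_
  rcases hne.lt_or_gt with h | h
  · rw [abs_sub_comm]
    exact abs_sub_le_two_mul_dualNorm hN hg hℓ' hℓ h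
  · exact abs_sub_le_two_mul_dualNorm hN hg hℓ hℓ' h

end DualNorm

theorem stmt13 (N : ℕ) (hN : 2 ≤ N) (T : (ℤ → ℝ) →ₗ[ℝ] ℝ) :
    ∃ u ∈ uSet N,
      (∀ v ∈ uSet N, iprod N (bD N u) (bD N v) = T v)
      ∧ (∀ u' ∈ uSet N, (∀ v ∈ uSet N, iprod N (bD N u') (bD N v) = T v) → u' = u)
      ∧ nlinf N (bD N u) ≤ 2 * dualNorm N ⇑T := by
  have hN₀ : 0 < N := by omega
  have := finiteDimensional_uSub hN₀
  obtain ⟨u, hu, huniq⟩ :=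
    (LinearMap.BilinForm.Nondegenerate.ofSeparatingLeft
      (separatingLeft_dirichletForm_restrict hN₀)).existsUnique_apply_eq (T ∘ₗ (uSub N).subtype)
  have hrepr : ∀ v ∈ uSet N, iprod N (bD N u) (bD N v) = T v := fun v hv => hu ⟨v, hv⟩
  exact ⟨u, u.2, hrepr,
    fun u' hu' h => congrArg Subtype.val (huniq ⟨u', hu'⟩ fun v => h v v.2),
    nlinf_le_two_mul_dualNorm hN₀ hrepr (sum_bD_eq_zero u.2.1)⟩
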